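/- Let v be a gross substitute integer-valued valuation on a finite set Ω, let p be an integer price vector, let S ⊆ Ω, and let p' = p + 1_S be the price vector obtained from p by increasing the price of every item of S by 1. Then u_{v,p} = u_{v,p'} + f_{v,p}(S), where u_{v,p} and u_{v,p'} denote the maximum utilities under p and p' and f_{v,p}(S) = min_{D ∈ D*_v(p)} |D ∩ S|. -/
import Mathlib


open Finset

noncomputable section

variable {Ω : Type*}

/-- The utility of a set `S` under valuation `v` and price vector `p`. -/
def util (v : Finset Ω → ℝ) (p : Ω → ℝ) (S : Finset Ω) : ℝ := v S - ∑ j ∈ S, p j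

/-- The demand set: all sets maximizing utility. -/
def Demand (v : Finset Ω → ℝ) (p : Ω → ℝ) : Set (Finset Ω) :=
  {S | ∀ T : Finset Ω, util v p T ≤ util v p S}

/-- The minimal demand sets: demand sets all of whose proper subsets have strictly
smaller utility. -/
def DemandMin (v : Finset Ω → ℝ) (p : Ω → ℝ) : Set (Finset Ω) :=
  {S | S ∈ Demand v p ∧ ∀ T : Finset Ω, T ⊂ S → util v p T < util v p S}

/-- The maximum utility of a player. -/
def maxUtil [Fintype Ω] (v : Finset Ω → ℝ) (p : Ω → ℝ) : ℝ :=
  Finset.univ.sup' Finset.univ_nonempty (util v p)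

/-- A valuation: zero on the empty set and monotone under inclusion. -/
def IsValuation (v : Finset Ω → ℝ) : Prop :=
  v ∅ = 0 ∧ ∀ S T : Finset Ω, S ⊆ T → v S ≤ v T

/-- Gross substitutes: if prices (weakly) increase, there is a demanded set containing
all previously demanded items whose price did not change. -/
def GrossSubstitute (v : Finset Ω → ℝ) : Prop :=
  ∀ p q : Ω → ℝ, (∀ j, 0 ≤ p j) → (∀ j, p j ≤ q j) →
    ∀ S ∈ Demand v p, ∃ S' ∈ Demand v q, ∀ j ∈ S, p j = q j → j ∈ S'

/-- `GGS k M`: the `(k,M)`-truncations of gross substitute valuations. -/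
def GGS (k : ℕ) (M : ℝ) (v : Finset Ω → ℝ) : Prop :=
  ∃ g : Finset Ω → ℝ, IsValuation g ∧ GrossSubstitute g ∧
    (∀ S : Finset Ω, S.card < k → v S = g S ∧ g S ≤ M) ∧
    (∀ S : Finset Ω, k ≤ S.card → v S = M ∧ M ≤ g S)

/-- `f_{v,p}(S) = min_{D ∈ D*_v(p)} |D ∩ S|`. -/
def fMin [DecidableEq Ω] (v : Finset Ω → ℝ) (p : Ω → ℝ) (S : Finset Ω) : ℕ :=
  sInf ((fun D => (D ∩ S).card) '' DemandMin v p)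

/-- `f_p(S) = (Σ_i f_{i,p}(S)) − |S|`. -/
def fTot [DecidableEq Ω] {n : ℕ} (v : Fin n → Finset Ω → ℝ) (p : Ω → ℝ) (S : Finset Ω) : ℤ :=
  (∑ i, (fMin (v i) p S : ℤ)) - S.card

/-- The Lyapunov function `L(p) = Σ_i u_{i,p} + Σ_j p(j)`. -/
def Lyap [Fintype Ω] {n : ℕ} (v : Fin n → Finset Ω → ℝ) (p : Ω → ℝ) : ℝ :=
  (∑ i, maxUtil (v i) p) + ∑ j, p j

/-- An envy-free allocation: pairwise disjoint sets, each demanded by its player. -/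
def EnvyFree {n : ℕ} (v : Fin n → Finset Ω → ℝ) (p : Ω → ℝ) (A : Fin n → Finset Ω) : Prop :=
  (∀ i j, i ≠ j → Disjoint (A i) (A j)) ∧ ∀ i, A i ∈ Demand (v i) p

/-- A Walrasian allocation: envy-free, and every unallocated item has price zero. -/
def Walrasian {n : ℕ} (v : Fin n → Finset Ω → ℝ) (p : Ω → ℝ) (A : Fin n → Finset Ω) : Prop :=
  EnvyFree v p A ∧ ∀ x : Ω, (∀ i, x ∉ A i) → p x = 0

/-- `addInd p S = p + 1_S`: increase the price of every item of `S` by one. -/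
def addInd [DecidableEq Ω] (p : Ω → ℝ) (S : Finset Ω) : Ω → ℝ :=
  fun j => p j + if j ∈ S then 1 else 0

/-- An integer price vector. -/
def IsIntVec (p : Ω → ℝ) : Prop := ∀ j, ∃ z : ℤ, p j = z

/-- An integer-valued valuation. -/
def IsIntVal (v : Finset Ω → ℝ) : Prop := ∀ S : Finset Ω, ∃ z : ℤ, v S = z

/-- A small player: every demanded set is a singleton. -/
def SmallPlayer (v : Finset Ω → ℝ) (p : Ω → ℝ) : Prop :=
  ∀ S ∈ Demand v p, ∃ x, S = {x}


set_option linter.unusedSectionVars false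
set_option linter.unusedVariables false

section AuxGS

variable {Ω : Type*} [Fintype Ω] [DecidableEq Ω]

lemma util_le_maxUtil (v : Finset Ω → ℝ) (p : Ω → ℝ) (W : Finset Ω) :
    util v p W ≤ maxUtil v p :=
  Finset.le_sup' (util v p) (Finset.mem_univ W)

lemma exists_demand (v : Finset Ω → ℝ) (p : Ω → ℝ) : ∃ T, T ∈ Demand v p := by
  obtain ⟨T, -, hT⟩ := Finset.exists_mem_eq_sup' Finset.univ_nonempty (util v p)
  exact ⟨T, fun W => hT ▸ util_le_maxUtil v p W⟩

lemma maxUtil_eq_of_demand {v : Finset Ω → ℝ} {p : Ω → ℝ} {T : Finset Ω}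
    (hT : T ∈ Demand v p) : maxUtil v p = util v p T :=
  le_antisymm (Finset.sup'_le _ _ fun W _ => hT W) (util_le_maxUtil v p T)

lemma util_addInd (v : Finset Ω → ℝ) (p : Ω → ℝ) (A W : Finset Ω) :
    util v (addInd p A) W = util v p W - ((W ∩ A).card : ℝ) := by
  have h : (∑ j ∈ W, (if j ∈ A then (1:ℝ) else 0)) = ((W ∩ A).card : ℝ) := by
    rw [Finset.sum_ite_mem, Finset.sum_const, nsmul_eq_mul, mul_one]
  simp only [util, addInd, Finset.sum_add_distrib, h]
  ring

lemma util_int {v : Finset Ω → ℝ} {p : Ω → ℝ} (hv : IsIntVal v) (hp : IsIntVec p)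
    (T : Finset Ω) : ∃ z : ℤ, util v p T = z := by
  choose zv hzv using hv
  choose zp hzp using hp
  refine ⟨zv T - ∑ j ∈ T, zp j, ?_⟩
  simp [util, hzv, hzp]

lemma int_le_sub_one {a b : ℝ} (ha : ∃ z : ℤ, a = z) (hb : ∃ z : ℤ, b = z)
    (h : a < b) : a ≤ b - 1 := by
  obtain ⟨za, rfl⟩ := ha
  obtain ⟨zb, rfl⟩ := hb
  have : za + 1 ≤ zb := by exact_mod_cast h
  have : (za : ℝ) + 1 ≤ zb := by exact_mod_cast this
  linarith

lemma addInd_nonneg {p : Ω → ℝ} (hp : ∀ j, 0 ≤ p j) (A : Finset Ω) :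
    ∀ j, 0 ≤ addInd p A j := by
  intro j
  have := hp j
  unfold addInd
  positivity

lemma addInd_int {p : Ω → ℝ} (hp : IsIntVec p) (A : Finset Ω) :
    IsIntVec (addInd p A) := by
  intro j
  obtain ⟨z, hz⟩ := hp j
  by_cases h : j ∈ A
  · exact ⟨z + 1, by simp [addInd, h, hz]⟩
  · exact ⟨z, by simp [addInd, h, hz]⟩

/-- Key lemma: for integral GS valuations, some set is demanded both at `p` and
at `p + 1_S`. -/
lemma exists_common_demand {v : Finset Ω → ℝ} (hgs : GrossSubstitute v)
    (hv : IsIntVal v) (S : Finset Ω) :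
    ∀ p : Ω → ℝ, (∀ j, 0 ≤ p j) → IsIntVec p →
      ∃ T, T ∈ Demand v p ∧ T ∈ Demand v (addInd p S) := by
  induction S using Finset.induction_on with
  | empty =>
    intro p hp hpint
    obtain ⟨T, hT⟩ := exists_demand v p
    have he : addInd p (∅ : Finset Ω) = p := funext fun j => by simp [addInd]
    exact ⟨T, hT, by rw [he]; exact hT⟩
  | @insert x S₀ hx ih =>
    intro p hp hpint
    set q := addInd p S₀ with hqdef
    have hq0 : ∀ j, 0 ≤ q j := addInd_nonneg hp S₀
    have hqint : IsIntVec q := addInd_int hpint S₀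
    obtain ⟨B₀, hB₀p, hB₀q⟩ := ih p hp hpint
    have hpq : addInd p (insert x S₀) = addInd q ({x} : Finset Ω) := by
      funext j
      simp only [addInd, Finset.mem_insert, Finset.mem_singleton, hqdef]
      by_cases hj : j = x
      · subst hj; simp [hx]
      · simp [hj]
    rw [hpq]
    set q' := addInd q ({x} : Finset Ω) with hq'def
    have huq' : ∀ W : Finset Ω, util v q' W = util v q W - ((W ∩ {x}).card : ℝ) :=
      util_addInd v q {x}
    have huq'_mem : ∀ W : Finset Ω, x ∈ W → util v q' W = util v q W - 1 := by
      intro W hW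
      rw [huq' W, Finset.inter_singleton_of_mem hW]
      norm_num
    have huq'_not : ∀ W : Finset Ω, x ∉ W → util v q' W = util v q W := by
      intro W hW
      rw [huq' W, Finset.inter_singleton_of_notMem hW]
      norm_num
    by_cases hcase : ∀ B ∈ Demand v q, x ∈ B
    · -- every set demanded at q contains x; then B₀ is still demanded at q'
      refine ⟨B₀, hB₀p, ?_⟩
      have hxB₀ : x ∈ B₀ := hcase B₀ hB₀q
      intro W
      rw [huq'_mem B₀ hxB₀]
      by_cases hxW : x ∈ W
      · rw [huq'_mem W hxW]
        have := hB₀q W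
        linarith
      · rw [huq'_not W hxW]
        have hlt : util v q W < util v q B₀ := by
          by_contra hcon
          push_neg at hcon
          have hWdem : W ∈ Demand v q := fun U => (hB₀q U).trans hcon
          exact hxW (hcase W hWdem)
        have := int_le_sub_one (util_int hv hqint W) (util_int hv hqint B₀) hlt
        linarith
    · -- some set demanded at q avoids x
      push_neg at hcase
      obtain ⟨B, hBq, hxB⟩ := hcase
      have hBq' : B ∈ Demand v q' := by
        intro W
        rw [huq'_not B hxB]
        calc util v q' W ≤ util v q W := by
              rw [huq' W]
              have : (0:ℝ) ≤ ((W ∩ {x}).card : ℝ) := by positivity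
              linarith
          _ ≤ util v q B := hBq W
      have hle : ∀ j, q j ≤ q' j := by
        intro j
        simp only [hq'def, addInd]
        by_cases h : j ∈ ({x} : Finset Ω) <;> simp [h]
      obtain ⟨B', hB'q', hkeep⟩ := hgs q q' hq0 hle B₀ hB₀q
      have hxB' : x ∉ B' := by
        intro hxB'
        have h1 : util v q' B ≤ util v q' B' := hB'q' B
        rw [huq'_not B hxB, huq'_mem B' hxB'] at h1
        have h2 : util v q B' ≤ util v q B := hBq B'
        linarith
      have hB'q : B' ∈ Demand v q := by
        intro W
        calc util v q W ≤ util v q B := hBq W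
          _ = util v q' B := (huq'_not B hxB).symm
          _ ≤ util v q' B' := hB'q' B
          _ = util v q B' := huq'_not B' hxB'
      have hsub : B₀ ∩ S₀ ⊆ B' ∩ S₀ := by
        intro j hj
        rw [Finset.mem_inter] at hj ⊢
        refine ⟨hkeep j hj.1 ?_, hj.2⟩
        have hjx : j ≠ x := fun h => hx (h ▸ hj.2)
        simp [hq'def, addInd, hjx]
      have hB'p : B' ∈ Demand v p := by
        intro W
        have h1 : util v p W ≤ util v p B₀ := hB₀p W
        have h2 : util v q B₀ ≤ util v q B' := hB'q B₀
        have h3 : ((B₀ ∩ S₀).card : ℝ) ≤ ((B' ∩ S₀).card : ℝ) := by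
          exact_mod_cast Finset.card_le_card hsub
        have e1 := util_addInd v p S₀ B₀
        have e2 := util_addInd v p S₀ B'
        rw [← hqdef] at e1 e2
        linarith
      exact ⟨B', hB'p, hB'q'⟩

lemma exists_demandMin_subset {v : Finset Ω → ℝ} {p : Ω → ℝ} :
    ∀ T : Finset Ω, T ∈ Demand v p → ∃ D ∈ DemandMin v p, D ⊆ T := by
  intro T
  induction T using Finset.strongInduction with
  | _ T ih =>
    intro hT
    by_cases h : ∀ W : Finset Ω, W ⊂ T → util v p W < util v p T
    · exact ⟨T, ⟨hT, h⟩, subset_rfl⟩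
    · push_neg at h
      obtain ⟨W, hWT, hWu⟩ := h
      have hW : W ∈ Demand v p := fun U => (hT U).trans hWu
      obtain ⟨D, hD, hDW⟩ := ih W hWT hW
      exact ⟨D, hD, hDW.trans hWT.subset⟩

end AuxGS

/-- `u_{v,p} = u_{v,p+1_S} + f_{v,p}(S)` for gross substitute valuations. -/
theorem gs_maxUtil_drop {Ω : Type*} [Fintype Ω] [DecidableEq Ω]
    (v : Finset Ω → ℝ) (hval : IsValuation v) (hgs : GrossSubstitute v)
    (hint : IsIntVal v)
    (p : Ω → ℝ) (hp : ∀ j, 0 ≤ p j) (hpint : IsIntVec p) (S : Finset Ω) :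
    maxUtil v p = maxUtil v (addInd p S) + (fMin v p S : ℝ) := by
  obtain ⟨T, hTp, hTp'⟩ := exists_common_demand hgs hint S p hp hpint
  have h1 : maxUtil v p = util v p T := maxUtil_eq_of_demand hTp
  have h2 : maxUtil v (addInd p S) = util v (addInd p S) T := maxUtil_eq_of_demand hTp'
  have h3 : util v (addInd p S) T = util v p T - ((T ∩ S).card : ℝ) := util_addInd v p S T
  -- the drop is exactly |T ∩ S|; now identify fMin with this quantity
  have hlb : ∀ D ∈ DemandMin v p, (T ∩ S).card ≤ (D ∩ S).card := by
    intro D hD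
    have hDdem : D ∈ Demand v p := hD.1
    have e1 : util v p D = util v p T := le_antisymm (hTp D) (hDdem T)
    have e2 : util v (addInd p S) D ≤ util v (addInd p S) T := hTp' D
    have e3 : util v (addInd p S) D = util v p D - ((D ∩ S).card : ℝ) := util_addInd v p S D
    have : ((T ∩ S).card : ℝ) ≤ ((D ∩ S).card : ℝ) := by linarith
    exact_mod_cast this
  obtain ⟨D, hD, hDT⟩ := exists_demandMin_subset T hTp
  have hDc : (D ∩ S).card = (T ∩ S).card :=
    le_antisymm (Finset.card_le_card (Finset.inter_subset_inter hDT subset_rfl)) (hlb D hD)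
  have hmem : (T ∩ S).card ∈ (fun D => (D ∩ S).card) '' DemandMin v p := ⟨D, hD, hDc⟩
  have hfmin : fMin v p S = (T ∩ S).card := by
    refine le_antisymm (Nat.sInf_le hmem) (le_csInf ⟨_, hmem⟩ ?_)
    rintro m ⟨D', hD', rfl⟩
    exact hlb D' hD'
  rw [hfmin]
  linarith
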